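/- Let S be a real random variable with S ≥ 0 a.s. and suppose the anti-concentration bound P(|S − ξ| ≤ κ) ≤ 4κ(E[S] + 1) holds for all ξ ∈ ℝ and κ > 0. Let T_n = S + R_n where R_n → 0 in probability with rate o_P(κ_n) for a sequence κ_n → 0 with κ_n·(E[S]+1) → 0. If c is such that P(S ≤ c) = 1 − β, then liminf_n P(T_n ≤ c) ≥ 1 − β. -/

import Mathlib

/-!
On the event `{S ≤ c}`, either `S` lies within `κₙ` of `c`, or `|Rₙ| > κₙ`, or `S + Rₙ ≤ c`.
Anti-concentration bounds the first probability by `4κₙ(E[S] + 1)`, so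
`P(S + Rₙ ≤ c) ≥ (1 - β) - 4κₙ(E[S] + 1) - P(|Rₙ| > κₙ)`, and the right-hand side tends to `1 - β`.
-/

open MeasureTheory Filter

theorem setOf_le_subset_add_le_union {Ω : Type*} (S R : Ω → ℝ) (c κ : ℝ) :
    {ω | S ω ≤ c} ⊆
      {ω | S ω + R ω ≤ c} ∪ {ω | |S ω - c| ≤ κ} ∪ {ω | κ < |R ω|} := by
  intro ω (hS : S ω ≤ c)
  by_contra! h
  simp only [Set.mem_union, Set.mem_ofPred_eq, not_or, not_le, not_lt] at h
  obtain ⟨⟨hsum, hnear⟩, hR⟩ := h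
  rw [abs_of_nonpos (by linarith)] at hnear
  linarith [(abs_le.mp hR).2]

theorem measureReal_setOf_le_le_add {Ω : Type*} [MeasurableSpace Ω] (μ : Measure Ω)
    [IsFiniteMeasure μ] (S R : Ω → ℝ) (c κ : ℝ) :
    μ.real {ω | S ω ≤ c} ≤
      μ.real {ω | S ω + R ω ≤ c} + μ.real {ω | |S ω - c| ≤ κ} + μ.real {ω | κ < |R ω|} :=
  calc μ.real {ω | S ω ≤ c}
      ≤ μ.real ({ω | S ω + R ω ≤ c} ∪ {ω | |S ω - c| ≤ κ} ∪ {ω | κ < |R ω|}) :=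
        measureReal_mono (setOf_le_subset_add_le_union S R c κ)
    _ ≤ _ := (measureReal_union_le _ _).trans (by gcongr; exact measureReal_union_le _ _)

theorem le_liminf_of_tendsto_of_le {α β : Type*} [ConditionallyCompleteLinearOrder β]
    [TopologicalSpace β] [OrderTopology β] {l : Filter α} [l.NeBot] {f g : α → β} {a : β}
    (hf : Tendsto f l (nhds a)) (hfg : ∀ᶠ x in l, f x ≤ g x)
    (hg : IsBoundedUnder (· ≤ ·) l g) : a ≤ l.liminf g :=
  hf.liminf_eq ▸ liminf_le_liminf hfg hf.isBoundedUnder_ge hg.isCoboundedUnder_ge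

theorem coverage_liminf_general {Ω : Type*} [MeasurableSpace Ω]
    (μ : Measure Ω) [IsProbabilityMeasure μ]
    (S : Ω → ℝ)
    (hanti : ∀ ξ : ℝ, ∀ κ : ℝ, 0 < κ →
      (μ {ω | |S ω - ξ| ≤ κ}).toReal ≤ 4 * κ * ((∫ ω, S ω ∂μ) + 1))
    (R : ℕ → Ω → ℝ) (κn : ℕ → ℝ) (hκpos : ∀ n, 0 < κn n)
    (hκE : Tendsto (fun n => κn n * ((∫ ω, S ω ∂μ) + 1)) atTop (nhds 0))
    (hR : Tendsto (fun n => (μ {ω | κn n < |R n ω|}).toReal) atTop (nhds 0))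
    (c β : ℝ)
    (hc : (μ {ω | S ω ≤ c}).toReal = 1 - β) :
    (1 - β : ℝ) ≤ atTop.liminf fun n => (μ {ω | S ω + R n ω ≤ c}).toReal := by
  set E := (∫ ω, S ω ∂μ) + 1
  have hlower : ∀ n, (1 - β) - (4 * (κn n * E) + μ.real {ω | κn n < |R n ω|}) ≤
      μ.real {ω | S ω + R n ω ≤ c} := fun n => by
    have hsplit := measureReal_setOf_le_le_add μ S (R n) c (κn n)
    have hnear : μ.real {ω | |S ω - c| ≤ κn n} ≤ 4 * κn n * E := hanti c (κn n) (hκpos n)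
    rw [measureReal_def, hc] at hsplit
    linarith
  have hlim : Tendsto (fun n => (1 - β) - (4 * (κn n * E) + μ.real {ω | κn n < |R n ω|}))
      atTop (nhds (1 - β)) := by
    simpa [measureReal_def] using tendsto_const_nhds.sub ((hκE.const_mul 4).add hR)
  exact le_liminf_of_tendsto_of_le hlim (.of_forall hlower)
    (isBoundedUnder_of ⟨1, fun _ => measureReal_le_one⟩)

/-- Coverage lower bound: if `S ≥ 0` satisfies the anti-concentration bound
`P(|S − ξ| ≤ κ) ≤ 4κ(E[S]+1)`, `T_n = S + R_n` with `R_n = o_P(κ_n)` for a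
sequence `κ_n → 0` with `κ_n(E[S]+1) → 0`, and `P(S ≤ c) = 1 − β`, then
`liminf_n P(T_n ≤ c) ≥ 1 − β`. -/
theorem coverage_liminf {Ω : Type*} [MeasurableSpace Ω]
    (μ : Measure Ω) [IsProbabilityMeasure μ]
    (S : Ω → ℝ) (hS0 : ∀ᵐ ω ∂μ, 0 ≤ S ω) (hSint : Integrable S μ)
    (hanti : ∀ ξ : ℝ, ∀ κ : ℝ, 0 < κ →
      (μ {ω | |S ω - ξ| ≤ κ}).toReal ≤ 4 * κ * ((∫ ω, S ω ∂μ) + 1))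
    (R : ℕ → Ω → ℝ) (κn : ℕ → ℝ) (hκpos : ∀ n, 0 < κn n)
    (hκ0 : Tendsto κn atTop (nhds 0))
    (hκE : Tendsto (fun n => κn n * ((∫ ω, S ω ∂μ) + 1)) atTop (nhds 0))
    (hR : Tendsto (fun n => (μ {ω | κn n < |R n ω|}).toReal) atTop (nhds 0))
    (c β : ℝ) (hβ : β ∈ Set.Ioo (0 : ℝ) 1)
    (hc : (μ {ω | S ω ≤ c}).toReal = 1 - β) :
    (1 - β : ℝ) ≤ atTop.liminf fun n => (μ {ω | S ω + R n ω ≤ c}).toReal :=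
  coverage_liminf_general μ S hanti R κn hκpos hκE hR c β hc
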